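/- Let k, f0, g0, x0, y0, the quantities φ_j, ψ, and the limit-section parametrization X_α, Y_α be as in the context. Let α ∈ k satisfy φ2²·φ3·α² − 3φ2·φ4·α − (φ3² − φ4·ψ) = 0 (the equation satisfied by the points at infinity of the curve C_Q(5)). Then z'⁵ divides −Y_α² + X_α³ + f0·X_α·w'⁴ + g0·w'⁶ in k[z', w']. (That is, the limit curve of the family of sections through Q, which lies in the plane z = 0, intersects the fiber y² = x³ + f0x + g0 at Q with multiplicity at least 5.) -/
import Mathlib


open Polynomial

noncomputable section

def phi2 {k : Type*} [Field k] (f0 g0 x0 : k) : k := 4 * (x0 ^ 3 + f0 * x0 + g0)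

def psiC {k : Type*} [Field k] (f0 x0 : k) : k := 2 * (3 * x0 ^ 2 + f0)

def phi3 {k : Type*} [Field k] (f0 g0 x0 : k) : k :=
  3 * x0 * phi2 f0 g0 x0 - (3 * x0 ^ 2 + f0) ^ 2

def phi4 {k : Type*} [Field k] (f0 g0 x0 : k) : k :=
  psiC f0 x0 * phi3 f0 g0 x0 - (phi2 f0 g0 x0) ^ 2

def phi5 {k : Type*} [Field k] (f0 g0 x0 : k) : k :=
  (phi2 f0 g0 x0) ^ 2 * phi4 f0 g0 x0 - (phi3 f0 g0 x0) ^ 3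

def phi6 {k : Type*} [Field k] (f0 g0 x0 : k) : k :=
  phi5 f0 g0 x0 - (phi4 f0 g0 x0) ^ 2

/-- `X_α = α·z'² + z'·w' + x₀·w'²`, with `z' = X 0` and `w' = X 1`. -/
def Xa {k : Type*} [Field k] (x0 α : k) : MvPolynomial (Fin 2) k :=
  MvPolynomial.C α * (MvPolynomial.X 0) ^ 2 + MvPolynomial.X 0 * MvPolynomial.X 1
    + MvPolynomial.C x0 * (MvPolynomial.X 1) ^ 2

/-- `Y_α = y₀·( ((4αφ₂φ₃ − 2φ₄)/φ₂³)·z'³ + ((αψφ₂ + 2φ₃)/φ₂²)·z'²·w' + (ψ/φ₂)·z'·w'² + w'³ )`,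
with `z' = X 0` and `w' = X 1`. -/
def Ya {k : Type*} [Field k] (f0 g0 x0 y0 α : k) : MvPolynomial (Fin 2) k :=
  MvPolynomial.C y0 *
    (MvPolynomial.C ((4 * α * phi2 f0 g0 x0 * phi3 f0 g0 x0 - 2 * phi4 f0 g0 x0)
        / (phi2 f0 g0 x0) ^ 3) * (MvPolynomial.X 0) ^ 3
      + MvPolynomial.C ((α * psiC f0 x0 * phi2 f0 g0 x0 + 2 * phi3 f0 g0 x0)
        / (phi2 f0 g0 x0) ^ 2) * (MvPolynomial.X 0) ^ 2 * MvPolynomial.X 1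
      + MvPolynomial.C (psiC f0 x0 / phi2 f0 g0 x0) * MvPolynomial.X 0 * (MvPolynomial.X 1) ^ 2
      + (MvPolynomial.X 1) ^ 3)

/-- `−Y_α² + X_α³ + f₀·X_α·w'⁴ + g₀·w'⁶`. -/
def limPoly {k : Type*} [Field k] (f0 g0 x0 y0 α : k) : MvPolynomial (Fin 2) k :=
  - (Ya f0 g0 x0 y0 α) ^ 2 + (Xa x0 α) ^ 3
    + MvPolynomial.C f0 * Xa x0 α * (MvPolynomial.X 1) ^ 4
    + MvPolynomial.C g0 * (MvPolynomial.X 1) ^ 6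

/-- Generic splitting of `−Y² + X³ + f₀Xw⁴ + g₀w⁶` into coefficients of `z'^i w'^(6-i)`. -/
lemma limPoly_split {k : Type*} [Field k] (f0 g0 x0 y0 α A B D : k) :
    - (MvPolynomial.C y0 *
        (MvPolynomial.C A * (MvPolynomial.X 0) ^ 3
          + MvPolynomial.C B * (MvPolynomial.X 0) ^ 2 * MvPolynomial.X 1
          + MvPolynomial.C D * MvPolynomial.X 0 * (MvPolynomial.X 1) ^ 2
          + (MvPolynomial.X 1) ^ 3)) ^ 2
      + (MvPolynomial.C α * (MvPolynomial.X 0) ^ 2 + MvPolynomial.X 0 * MvPolynomial.X 1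
          + MvPolynomial.C x0 * (MvPolynomial.X 1) ^ 2) ^ 3
      + MvPolynomial.C f0 * (MvPolynomial.C α * (MvPolynomial.X 0) ^ 2
          + MvPolynomial.X 0 * MvPolynomial.X 1
          + MvPolynomial.C x0 * (MvPolynomial.X 1) ^ 2) * (MvPolynomial.X 1) ^ 4
      + MvPolynomial.C g0 * (MvPolynomial.X 1) ^ 6
    = MvPolynomial.C (-y0 ^ 2 + x0 ^ 3 + f0 * x0 + g0) * (MvPolynomial.X 1 : MvPolynomial (Fin 2) k) ^ 6
      + MvPolynomial.C (-(2 * y0 ^ 2 * D) + 3 * x0 ^ 2 + f0)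
          * MvPolynomial.X 0 * (MvPolynomial.X 1) ^ 5
      + MvPolynomial.C (-(y0 ^ 2 * (D ^ 2 + 2 * B)) + 3 * x0 ^ 2 * α + 3 * x0 + f0 * α)
          * (MvPolynomial.X 0) ^ 2 * (MvPolynomial.X 1) ^ 4
      + MvPolynomial.C (-(y0 ^ 2 * (2 * A + 2 * B * D)) + 6 * x0 * α + 1)
          * (MvPolynomial.X 0) ^ 3 * (MvPolynomial.X 1) ^ 3
      + MvPolynomial.C (-(y0 ^ 2 * (2 * A * D + B ^ 2)) + 3 * x0 * α ^ 2 + 3 * α)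
          * (MvPolynomial.X 0) ^ 4 * (MvPolynomial.X 1) ^ 2
      + (MvPolynomial.X 0) ^ 5
          * (MvPolynomial.C (-(2 * y0 ^ 2 * A * B) + 3 * α ^ 2) * MvPolynomial.X 1
            + MvPolynomial.C (-(y0 ^ 2 * A ^ 2) + α ^ 3) * MvPolynomial.X 0) := by
  simp only [map_add, map_sub, map_neg, map_mul, map_pow, map_ofNat, map_one]
  try ring

/-- The five scalar coefficient identities. -/
lemma scalar_ids {k : Type*} [Field k] (hk2 : (2 : k) ≠ 0)
    (f0 x0 y0 α P2 P3 P4 ψ A B D : k) (hy0 : y0 ≠ 0)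
    (hψ : ψ = 2 * (3 * x0 ^ 2 + f0))
    (hP3 : P3 = 3 * x0 * P2 - (3 * x0 ^ 2 + f0) ^ 2)
    (hP4 : P4 = ψ * P3 - P2 ^ 2)
    (hP2y : P2 = 4 * y0 ^ 2)
    (hD : D = ψ / P2) (hB : B = (α * ψ * P2 + 2 * P3) / P2 ^ 2)
    (hA : A = (4 * α * P2 * P3 - 2 * P4) / P2 ^ 3)
    (hα : P2 ^ 2 * P3 * α ^ 2 - 3 * P2 * P4 * α - (P3 ^ 2 - P4 * ψ) = 0) :
    (-(2 * y0 ^ 2 * D) + 3 * x0 ^ 2 + f0 = 0)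
    ∧ (-(y0 ^ 2 * (D ^ 2 + 2 * B)) + 3 * x0 ^ 2 * α + 3 * x0 + f0 * α = 0)
    ∧ (-(y0 ^ 2 * (2 * A + 2 * B * D)) + 6 * x0 * α + 1 = 0)
    ∧ (-(y0 ^ 2 * (2 * A * D + B ^ 2)) + 3 * x0 * α ^ 2 + 3 * α = 0) := by
  have h4ne : (4 : k) ≠ 0 := by
    have := mul_ne_zero hk2 hk2; convert this using 1; norm_num
  have hP2ne : P2 ≠ 0 := by rw [hP2y]; exact mul_ne_zero h4ne (pow_ne_zero 2 hy0)
  have hy2 : y0 ^ 2 = P2 / 4 := by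
    rw [hP2y, mul_comm]; exact (mul_div_cancel_right₀ _ h4ne).symm
  refine ⟨?_, ?_, ?_, ?_⟩
  · rw [hD, hψ, hy2]; field_simp [hP2ne, h4ne]; ring
  · rw [hD, hB, hy2, hψ, hP3]; field_simp [hP2ne, h4ne]; ring
  · rw [hA, hB, hD, hy2, hP4, hψ, hP3]; field_simp [hP2ne, h4ne]; ring
  · have key : -(y0 ^ 2 * (2 * A * D + B ^ 2)) + 3 * x0 * α ^ 2 + 3 * α
        = (P2 ^ 2 * P3 * α ^ 2 - 3 * P2 * P4 * α - (P3 ^ 2 - P4 * ψ)) / P2 ^ 3 := by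
      rw [hA, hB, hD, hy2, hP4, hψ, hP3]
      field_simp [hP2ne, h4ne]
      ring
    rw [key, hα, zero_div]

/-- **Lemma**: each limit curve attached to a point at infinity of `C_Q(5)` (i.e. to a root
`α` of `φ₂²φ₃·α² − 3φ₂φ₄·α − (φ₃² − φ₄ψ)`) meets the fiber `y² = x³ + f₀x + g₀` at `Q` with
multiplicity at least 5: `z'⁵` divides `−Y_α² + X_α³ + f₀·X_α·w'⁴ + g₀·w'⁶`. -/
theorem stmt11 (k : Type*) [Field k] (hk2 : (2 : k) ≠ 0) (hk3 : (3 : k) ≠ 0)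
    (f0 g0 x0 y0 : k) (hy0 : y0 ≠ 0)
    (hQ : y0 ^ 2 = x0 ^ 3 + f0 * x0 + g0)
    (α : k)
    (hα : (phi2 f0 g0 x0) ^ 2 * phi3 f0 g0 x0 * α ^ 2 - 3 * phi2 f0 g0 x0 * phi4 f0 g0 x0 * α
      - ((phi3 f0 g0 x0) ^ 2 - phi4 f0 g0 x0 * psiC f0 x0) = 0) :
    (MvPolynomial.X 0 : MvPolynomial (Fin 2) k) ^ 5 ∣ limPoly f0 g0 x0 y0 α := by
  have hP2y : phi2 f0 g0 x0 = 4 * y0 ^ 2 := by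
    unfold phi2; linear_combination (-4) * hQ
  obtain ⟨h1, h2, h3, h4⟩ := scalar_ids hk2 f0 x0 y0 α
    (phi2 f0 g0 x0) (phi3 f0 g0 x0) (phi4 f0 g0 x0) (psiC f0 x0)
    ((4 * α * phi2 f0 g0 x0 * phi3 f0 g0 x0 - 2 * phi4 f0 g0 x0) / (phi2 f0 g0 x0) ^ 3)
    ((α * psiC f0 x0 * phi2 f0 g0 x0 + 2 * phi3 f0 g0 x0) / (phi2 f0 g0 x0) ^ 2)
    (psiC f0 x0 / phi2 f0 g0 x0)
    hy0 rfl rfl rfl hP2y rfl rfl rfl hα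
  have h0 : -y0 ^ 2 + x0 ^ 3 + f0 * x0 + g0 = 0 := by linear_combination -hQ
  refine ⟨MvPolynomial.C (-(2 * y0 ^ 2
        * ((4 * α * phi2 f0 g0 x0 * phi3 f0 g0 x0 - 2 * phi4 f0 g0 x0) / (phi2 f0 g0 x0) ^ 3)
        * ((α * psiC f0 x0 * phi2 f0 g0 x0 + 2 * phi3 f0 g0 x0) / (phi2 f0 g0 x0) ^ 2))
        + 3 * α ^ 2) * MvPolynomial.X 1
    + MvPolynomial.C (-(y0 ^ 2
        * ((4 * α * phi2 f0 g0 x0 * phi3 f0 g0 x0 - 2 * phi4 f0 g0 x0) / (phi2 f0 g0 x0) ^ 3) ^ 2)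
        + α ^ 3) * MvPolynomial.X 0, ?_⟩
  have e1 : limPoly f0 g0 x0 y0 α
      = - (MvPolynomial.C y0 *
        (MvPolynomial.C ((4 * α * phi2 f0 g0 x0 * phi3 f0 g0 x0 - 2 * phi4 f0 g0 x0)
            / (phi2 f0 g0 x0) ^ 3) * (MvPolynomial.X 0) ^ 3
          + MvPolynomial.C ((α * psiC f0 x0 * phi2 f0 g0 x0 + 2 * phi3 f0 g0 x0)
            / (phi2 f0 g0 x0) ^ 2) * (MvPolynomial.X 0) ^ 2 * MvPolynomial.X 1
          + MvPolynomial.C (psiC f0 x0 / phi2 f0 g0 x0) * MvPolynomial.X 0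
              * (MvPolynomial.X 1) ^ 2
          + (MvPolynomial.X 1) ^ 3)) ^ 2
      + (MvPolynomial.C α * (MvPolynomial.X 0) ^ 2 + MvPolynomial.X 0 * MvPolynomial.X 1
          + MvPolynomial.C x0 * (MvPolynomial.X 1) ^ 2) ^ 3
      + MvPolynomial.C f0 * (MvPolynomial.C α * (MvPolynomial.X 0) ^ 2
          + MvPolynomial.X 0 * MvPolynomial.X 1
          + MvPolynomial.C x0 * (MvPolynomial.X 1) ^ 2) * (MvPolynomial.X 1) ^ 4
      + MvPolynomial.C g0 * (MvPolynomial.X 1) ^ 6 := rfl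
  rw [e1, limPoly_split, h0, h1, h2, h3, h4]
  simp only [map_zero, zero_mul, add_zero, zero_add]
  try ring

end
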